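/- For the oscillating predator–prey field ũ₀(x,y,τ) = (α̃x − β̃xy, −γ̃y + μ̃xy) with α̃, β̃, γ̃, μ̃ zero-average 2π-periodic scalar functions of τ, the drift velocity is V̄₂(x,y) = (Axy − Bx²y, −Cxy + Bxy²) where A = ⟨β̃ γ̃^τ⟩, B = ⟨β̃ μ̃^τ⟩, C = ⟨α̃ μ̃^τ⟩. -/

import Mathlib

/-- The τ-average of a function over one period `[0, 2π]`. -/
noncomputable def avg (h : ℝ → ℝ) : ℝ :=
  (1 / (2 * Real.pi)) * ∫ τ in (0:ℝ)..(2 * Real.pi), h τ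

/-- Tilde-integration: the zero-average antiderivative of a zero-average periodic function. -/
noncomputable def tint (h : ℝ → ℝ) : ℝ → ℝ :=
  fun τ => (∫ σ in (0:ℝ)..τ, h σ) - avg (fun t => ∫ σ in (0:ℝ)..t, h σ)

/-- First component of the oscillating predator–prey field: α̃x − β̃xy. -/
noncomputable def uPP1 (al be : ℝ → ℝ) (x y τ : ℝ) : ℝ := al τ * x - be τ * x * y

/-- Second component of the oscillating predator–prey field: −γ̃y + μ̃xy. -/
noncomputable def uPP2 (ga mu : ℝ → ℝ) (x y τ : ℝ) : ℝ := -(ga τ) * y + mu τ * x * y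

section Aux

lemma avg_congr' {f g : ℝ → ℝ} (h : ∀ τ, f τ = g τ) : avg f = avg g :=
  congrArg avg (funext h)

lemma avg_add' {f g : ℝ → ℝ} (hf : Continuous f) (hg : Continuous g) :
    avg (fun τ => f τ + g τ) = avg f + avg g := by
  unfold avg
  rw [intervalIntegral.integral_add (hf.intervalIntegrable _ _) (hg.intervalIntegrable _ _)]
  ring

lemma avg_const_mul' (c : ℝ) (f : ℝ → ℝ) :
    avg (fun τ => c * f τ) = c * avg f := by
  unfold avg
  rw [intervalIntegral.integral_const_mul]
  ring

lemma continuous_primitive' {f : ℝ → ℝ} (hf : Continuous f) :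
    Continuous fun t => ∫ σ in (0:ℝ)..t, f σ := by
  have h : ∀ t : ℝ, HasDerivAt (fun t => ∫ σ in (0:ℝ)..t, f σ) (f t) t :=
    fun t => (hf.integral_hasStrictDerivAt 0 t).hasDerivAt
  exact continuous_iff_continuousAt.mpr fun t => (h t).continuousAt

lemma continuous_tint {f : ℝ → ℝ} (hf : Continuous f) : Continuous (tint f) := by
  unfold tint
  exact (continuous_primitive' hf).sub continuous_const

/-- Integration by parts identity: ⟨f̃^τ g̃⟩ = −⟨f̃ g̃^τ⟩. -/
lemma avg_tint_mul {f g : ℝ → ℝ} (hf : Continuous f) (hg : Continuous g)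
    (hf0 : avg f = 0) (hg0 : avg g = 0) :
    avg (fun τ => tint f τ * g τ) = - avg (fun τ => f τ * tint g τ) := by
  set F : ℝ → ℝ := fun t => ∫ σ in (0:ℝ)..t, f σ with hF
  set G : ℝ → ℝ := fun t => ∫ σ in (0:ℝ)..t, g σ with hG
  have hpi : (2 * Real.pi) ≠ 0 := by positivity
  have hintf : (∫ σ in (0:ℝ)..(2*Real.pi), f σ) = 0 := by
    have := hf0
    unfold avg at this
    field_simp at this
    exact this.trans (mul_zero _)
  have hintg : (∫ σ in (0:ℝ)..(2*Real.pi), g σ) = 0 := by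
    have := hg0
    unfold avg at this
    field_simp at this
    exact this.trans (mul_zero _)
  have hF0 : F 0 = 0 := intervalIntegral.integral_same
  have hG0 : G 0 = 0 := intervalIntegral.integral_same
  have hF2 : F (2*Real.pi) = 0 := hintf
  have hG2 : G (2*Real.pi) = 0 := hintg
  have hdF : ∀ t ∈ Set.uIcc (0:ℝ) (2*Real.pi), HasDerivAt F (f t) t :=
    fun t _ => (hf.integral_hasStrictDerivAt 0 t).hasDerivAt
  have hdG : ∀ t ∈ Set.uIcc (0:ℝ) (2*Real.pi), HasDerivAt G (g t) t :=
    fun t _ => (hg.integral_hasStrictDerivAt 0 t).hasDerivAt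
  have ibp : (∫ τ in (0:ℝ)..(2*Real.pi), F τ * g τ)
      = F (2*Real.pi) * G (2*Real.pi) - F 0 * G 0 - ∫ τ in (0:ℝ)..(2*Real.pi), f τ * G τ :=
    intervalIntegral.integral_mul_deriv_eq_deriv_mul hdF hdG
      (hf.intervalIntegrable _ _) (hg.intervalIntegrable _ _)
  have ibp' : (∫ τ in (0:ℝ)..(2*Real.pi), F τ * g τ)
      = - ∫ τ in (0:ℝ)..(2*Real.pi), f τ * G τ := by
    rw [ibp, hF0, hF2, hG2]; ring
  have hcF : Continuous F := continuous_primitive' hf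
  have hcG : Continuous G := continuous_primitive' hg
  have lhs : avg (fun τ => tint f τ * g τ) = avg (fun τ => F τ * g τ) := by
    have : avg (fun τ => tint f τ * g τ)
        = avg (fun τ => F τ * g τ + (-(avg F)) * g τ) :=
      avg_congr' (fun τ => by simp [tint, hF]; ring)
    rw [this, avg_add' (by fun_prop) (by fun_prop), avg_const_mul', hg0]
    ring
  have rhs : avg (fun τ => f τ * tint g τ) = avg (fun τ => f τ * G τ) := by
    have : avg (fun τ => f τ * tint g τ)
        = avg (fun τ => f τ * G τ + (-(avg G)) * f τ) :=
      avg_congr' (fun τ => by simp [tint, hG]; ring)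
    rw [this, avg_add' (by fun_prop) (by fun_prop), avg_const_mul', hf0]
    ring
  rw [lhs, rhs]
  unfold avg
  rw [ibp']
  ring

/-- ⟨f̃^τ f̃⟩ = 0. -/
lemma avg_tint_self {f : ℝ → ℝ} (hf : Continuous f) (hf0 : avg f = 0) :
    avg (fun τ => tint f τ * f τ) = 0 := by
  have h := avg_tint_mul hf hf hf0 hf0
  have hc : avg (fun τ => f τ * tint f τ) = avg (fun τ => tint f τ * f τ) :=
    avg_congr' (fun τ => mul_comm _ _)
  rw [hc] at h
  linarith

/-- Linearity of tilde-integration. -/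
lemma tint_lin {f g : ℝ → ℝ} (hf : Continuous f) (hg : Continuous g) (a b : ℝ) (τ : ℝ) :
    tint (fun σ => a * f σ + b * g σ) τ = a * tint f τ + b * tint g τ := by
  have hint : ∀ t : ℝ, (∫ σ in (0:ℝ)..t, (a * f σ + b * g σ))
      = a * (∫ σ in (0:ℝ)..t, f σ) + b * (∫ σ in (0:ℝ)..t, g σ) := by
    intro t
    rw [intervalIntegral.integral_add (f := fun σ => a * f σ) (g := fun σ => b * g σ) ((continuous_const.mul hf).intervalIntegrable _ _) ((continuous_const.mul hg).intervalIntegrable _ _),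
      intervalIntegral.integral_const_mul, intervalIntegral.integral_const_mul]
  unfold tint
  rw [hint]
  have : avg (fun t => ∫ σ in (0:ℝ)..t, (a * f σ + b * g σ))
      = avg (fun t => a * (∫ σ in (0:ℝ)..t, f σ) + b * (∫ σ in (0:ℝ)..t, g σ)) :=
    avg_congr' (fun t => hint t)
  rw [this, avg_add' (by exact (continuous_const.mul (continuous_primitive' hf)))
      (by exact (continuous_const.mul (continuous_primitive' hg))),
    avg_const_mul', avg_const_mul']
  ring

lemma avg_comb6 (c1 c2 c3 c4 c5 c6 : ℝ) {h1 h2 h3 h4 h5 h6 : ℝ → ℝ}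
    (H1 : Continuous h1) (H2 : Continuous h2) (H3 : Continuous h3)
    (H4 : Continuous h4) (H5 : Continuous h5) (H6 : Continuous h6) :
    avg (fun τ => c1 * h1 τ + c2 * h2 τ + c3 * h3 τ + c4 * h4 τ + c5 * h5 τ + c6 * h6 τ)
      = c1 * avg h1 + c2 * avg h2 + c3 * avg h3 + c4 * avg h4 + c5 * avg h5 + c6 * avg h6 := by
  rw [avg_add' (by fun_prop) (by fun_prop), avg_add' (by fun_prop) (by fun_prop),
    avg_add' (by fun_prop) (by fun_prop), avg_add' (by fun_prop) (by fun_prop),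
    avg_add' (by fun_prop) (by fun_prop),
    avg_const_mul', avg_const_mul', avg_const_mul', avg_const_mul', avg_const_mul',
    avg_const_mul']

end Aux

theorem predator_prey_drift_velocity
    (al be ga mu : ℝ → ℝ)
    (hal : ContDiff ℝ (⊤ : ℕ∞) al) (hbe : ContDiff ℝ (⊤ : ℕ∞) be)
    (hga : ContDiff ℝ (⊤ : ℕ∞) ga) (hmu : ContDiff ℝ (⊤ : ℕ∞) mu)
    (hal_per : ∀ τ, al (τ + 2 * Real.pi) = al τ)
    (hbe_per : ∀ τ, be (τ + 2 * Real.pi) = be τ)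
    (hga_per : ∀ τ, ga (τ + 2 * Real.pi) = ga τ)
    (hmu_per : ∀ τ, mu (τ + 2 * Real.pi) = mu τ)
    (hal_avg : avg al = 0) (hbe_avg : avg be = 0)
    (hga_avg : avg ga = 0) (hmu_avg : avg mu = 0) :
    ∀ x y : ℝ,
      (avg (fun τ =>
          tint (fun σ => uPP1 al be x y σ) τ * deriv (fun x' => uPP1 al be x' y τ) x
            + tint (fun σ => uPP2 ga mu x y σ) τ * deriv (fun y' => uPP1 al be x y' τ) y)
        = avg (fun τ => be τ * tint ga τ) * x * y
            - avg (fun τ => be τ * tint mu τ) * x ^ 2 * y) ∧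
      (avg (fun τ =>
          tint (fun σ => uPP1 al be x y σ) τ * deriv (fun x' => uPP2 ga mu x' y τ) x
            + tint (fun σ => uPP2 ga mu x y σ) τ * deriv (fun y' => uPP2 ga mu x y' τ) y)
        = -(avg (fun τ => al τ * tint mu τ)) * x * y
            + avg (fun τ => be τ * tint mu τ) * x * y ^ 2) := by
  have hcal : Continuous al := hal.continuous
  have hcbe : Continuous be := hbe.continuous
  have hcga : Continuous ga := hga.continuous
  have hcmu : Continuous mu := hmu.continuous
  intro x y
  -- tint of the field components
  have t1 : ∀ τ, tint (fun σ => uPP1 al be x y σ) τ = x * tint al τ + (-(x*y)) * tint be τ := by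
    intro τ
    have h : (fun σ => uPP1 al be x y σ) = fun σ => x * al σ + (-(x*y)) * be σ := by
      funext σ; unfold uPP1; ring
    rw [h, tint_lin hcal hcbe]
  have t2 : ∀ τ, tint (fun σ => uPP2 ga mu x y σ) τ = (-y) * tint ga τ + (x*y) * tint mu τ := by
    intro τ
    have h : (fun σ => uPP2 ga mu x y σ) = fun σ => (-y) * ga σ + (x*y) * mu σ := by
      funext σ; unfold uPP2; ring
    rw [h, tint_lin hcga hcmu]
  -- derivatives
  have d11 : ∀ τ, deriv (fun x' => uPP1 al be x' y τ) x = al τ - be τ * y := by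
    intro τ
    have h : HasDerivAt (fun x' => uPP1 al be x' y τ) (al τ - be τ * y) x := by
      unfold uPP1
      have h1 : HasDerivAt (fun x' : ℝ => al τ * x') (al τ) x := by
        simpa using (hasDerivAt_id x).const_mul (al τ)
      have h2 : HasDerivAt (fun x' : ℝ => be τ * x' * y) (be τ * y) x := by
        simpa using ((hasDerivAt_id x).const_mul (be τ)).mul_const y
      exact h1.sub h2
    exact h.deriv
  have d12 : ∀ τ, deriv (fun y' => uPP1 al be x y' τ) y = -(be τ * x) := by
    intro τ
    have h : HasDerivAt (fun y' => uPP1 al be x y' τ) (-(be τ * x)) y := by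
      unfold uPP1
      have h2 : HasDerivAt (fun y' : ℝ => be τ * x * y') (be τ * x) y := by
        simpa using (hasDerivAt_id y).const_mul (be τ * x)
      have h3 := (hasDerivAt_const y (al τ * x)).sub h2
      rw [zero_sub] at h3
      exact h3
    exact h.deriv
  have d21 : ∀ τ, deriv (fun x' => uPP2 ga mu x' y τ) x = mu τ * y := by
    intro τ
    have h : HasDerivAt (fun x' => uPP2 ga mu x' y τ) (mu τ * y) x := by
      unfold uPP2
      have h2 : HasDerivAt (fun x' : ℝ => mu τ * x' * y) (mu τ * y) x := by
        simpa using ((hasDerivAt_id x).const_mul (mu τ)).mul_const y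
      have h3 := (hasDerivAt_const x (-(ga τ) * y)).add h2
      rw [zero_add] at h3
      exact h3
    exact h.deriv
  have d22 : ∀ τ, deriv (fun y' => uPP2 ga mu x y' τ) y = -(ga τ) + mu τ * x := by
    intro τ
    have h : HasDerivAt (fun y' => uPP2 ga mu x y' τ) (-(ga τ) + mu τ * x) y := by
      unfold uPP2
      have h1 : HasDerivAt (fun y' : ℝ => -(ga τ) * y') (-(ga τ)) y := by
        simpa using (hasDerivAt_id y).const_mul (-(ga τ))
      have h2 : HasDerivAt (fun y' : ℝ => mu τ * x * y') (mu τ * x) y := by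
        simpa using (hasDerivAt_id y).const_mul (mu τ * x)
      exact h1.add h2
    exact h.deriv
  -- basic average identities
  have Iaa : avg (fun τ => tint al τ * al τ) = 0 := avg_tint_self hcal hal_avg
  have Ibb : avg (fun τ => tint be τ * be τ) = 0 := avg_tint_self hcbe hbe_avg
  have Igg : avg (fun τ => tint ga τ * ga τ) = 0 := avg_tint_self hcga hga_avg
  have Imm : avg (fun τ => tint mu τ * mu τ) = 0 := avg_tint_self hcmu hmu_avg
  have Iab : avg (fun τ => tint al τ * be τ) = - avg (fun τ => al τ * tint be τ) :=
    avg_tint_mul hcal hcbe hal_avg hbe_avg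
  have Iba : avg (fun τ => tint be τ * al τ) = avg (fun τ => al τ * tint be τ) :=
    avg_congr' (fun τ => mul_comm _ _)
  have Igm : avg (fun τ => tint ga τ * mu τ) = - avg (fun τ => ga τ * tint mu τ) :=
    avg_tint_mul hcga hcmu hga_avg hmu_avg
  have Img : avg (fun τ => tint mu τ * ga τ) = avg (fun τ => ga τ * tint mu τ) :=
    avg_congr' (fun τ => mul_comm _ _)
  have Igb : avg (fun τ => tint ga τ * be τ) = avg (fun τ => be τ * tint ga τ) :=
    avg_congr' (fun τ => mul_comm _ _)
  have Imb : avg (fun τ => tint mu τ * be τ) = avg (fun τ => be τ * tint mu τ) :=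
    avg_congr' (fun τ => mul_comm _ _)
  have Iam : avg (fun τ => tint al τ * mu τ) = - avg (fun τ => al τ * tint mu τ) :=
    avg_tint_mul hcal hcmu hal_avg hmu_avg
  have Ibm : avg (fun τ => tint be τ * mu τ) = - avg (fun τ => be τ * tint mu τ) :=
    avg_tint_mul hcbe hcmu hbe_avg hmu_avg
  constructor
  · have key : (fun τ =>
        tint (fun σ => uPP1 al be x y σ) τ * deriv (fun x' => uPP1 al be x' y τ) x
          + tint (fun σ => uPP2 ga mu x y σ) τ * deriv (fun y' => uPP1 al be x y' τ) y)
        = fun τ => x * (tint al τ * al τ) + (-(x*y)) * (tint al τ * be τ)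
            + (-(x*y)) * (tint be τ * al τ) + (x*y^2) * (tint be τ * be τ)
            + (x*y) * (tint ga τ * be τ) + (-(x^2*y)) * (tint mu τ * be τ) := by
      funext τ
      rw [t1 τ, t2 τ, d11 τ, d12 τ]
      ring
    rw [key, avg_comb6 _ _ _ _ _ _ (h1 := fun τ => tint al τ * al τ) (h2 := fun τ => tint al τ * be τ) (h3 := fun τ => tint be τ * al τ) (h4 := fun τ => tint be τ * be τ) (h5 := fun τ => tint ga τ * be τ) (h6 := fun τ => tint mu τ * be τ)
        ((continuous_tint hcal).mul hcal) ((continuous_tint hcal).mul hcbe)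
        ((continuous_tint hcbe).mul hcal) ((continuous_tint hcbe).mul hcbe)
        ((continuous_tint hcga).mul hcbe) ((continuous_tint hcmu).mul hcbe),
      Iaa, Ibb, Iab, Iba, Igb, Imb]
    ring
  · have key : (fun τ =>
        tint (fun σ => uPP1 al be x y σ) τ * deriv (fun x' => uPP2 ga mu x' y τ) x
          + tint (fun σ => uPP2 ga mu x y σ) τ * deriv (fun y' => uPP2 ga mu x y' τ) y)
        = fun τ => (x*y) * (tint al τ * mu τ) + (-(x*y^2)) * (tint be τ * mu τ)
            + y * (tint ga τ * ga τ) + (-(x*y)) * (tint ga τ * mu τ)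
            + (-(x*y)) * (tint mu τ * ga τ) + (x^2*y) * (tint mu τ * mu τ) := by
      funext τ
      rw [t1 τ, t2 τ, d21 τ, d22 τ]
      ring
    rw [key, avg_comb6 _ _ _ _ _ _ (h1 := fun τ => tint al τ * mu τ) (h2 := fun τ => tint be τ * mu τ) (h3 := fun τ => tint ga τ * ga τ) (h4 := fun τ => tint ga τ * mu τ) (h5 := fun τ => tint mu τ * ga τ) (h6 := fun τ => tint mu τ * mu τ)
        ((continuous_tint hcal).mul hcmu) ((continuous_tint hcbe).mul hcmu)
        ((continuous_tint hcga).mul hcga) ((continuous_tint hcga).mul hcmu)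
        ((continuous_tint hcmu).mul hcga) ((continuous_tint hcmu).mul hcmu),
      Igg, Imm, Iam, Ibm, Igm, Img]
    ring
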